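/- Let F, G : 𝒜 ⥤ ℬ be lax monoidal functors between symmetric Picard categories and let σ : F ⟶ G be a monoidal natural transformation. Then for every object a of 𝒜 the square (σ_a)^• ≫ c^F_a ≫ σ_{a^•} = c^G_a commutes, as morphisms (Ga)^• ⟶ G(a^•), where (σ_a)^• : (Ga)^• ⟶ (Fa)^• is the dual of the component σ_a. -/

import Mathlib

/-!
In a Picard category every object `x` is tensor-invertible, so `- ▷ x` is faithful and
`c^G_a` is the only morphism satisfying its defining equation. It therefore suffices to check
that `(σ_a)^• ≫ c^F_a ≫ σ_{a^•}` satisfies that equation: the defining property of the dual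
`(σ_a)^•` absorbs `j_{Ga}` into `j_{Fa}`, after which monoidality and naturality of `σ` carry the
equation for `c^F_a` over to `G`.
-/

open CategoryTheory Category MonoidalCategory

universe v u

section InvertibleObject

variable {C : Type u} [Category.{v} C] [MonoidalCategory C] {x y z z' : C}

def unwhiskerRight (e : 𝟙_ C ≅ z ⊗ z') (m : x ⊗ z ⟶ y ⊗ z) : x ⟶ y :=
  (ρ_ x).inv ≫ x ◁ e.hom ≫ (α_ x z z').inv ≫ m ▷ z' ≫ (α_ y z z').hom ≫ y ◁ e.inv ≫ (ρ_ y).hom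

lemma unwhiskerRight_whiskerRight (e : 𝟙_ C ≅ z ⊗ z') (f : x ⟶ y) :
    unwhiskerRight e (f ▷ z) = f := by
  rw [unwhiskerRight, ← whiskerRight_tensor_assoc, ← whisker_exchange_assoc]
  simp

lemma whiskerRight_injective (e : 𝟙_ C ≅ z ⊗ z') :
    Function.Injective (fun f : x ⟶ y => f ▷ z) := fun f g h => by
  rw [← unwhiskerRight_whiskerRight e f, ← unwhiskerRight_whiskerRight e g]
  exact congrArg _ h

lemma whiskerRight_unwhiskerRight (e : 𝟙_ C ≅ z ⊗ z') (e' : 𝟙_ C ≅ z' ⊗ z)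
    (m : x ⊗ z ⟶ y ⊗ z) : unwhiskerRight e m ▷ z = m := by
  apply whiskerRight_injective e'
  have : unwhiskerRight e m ▷ (z ⊗ z') = (α_ x z z').inv ≫ m ▷ z' ≫ (α_ y z z').hom := by
    rw [← cancel_epi (x ◁ e.hom), whisker_exchange, unwhiskerRight]
    simp
  simpa using this

end InvertibleObject

/-- A symmetric Picard category: a symmetric monoidal groupoid equipped with, for every
object `a`, a chosen object `dual a` and a chosen isomorphism `j a : 𝟙_ C ≅ dual a ⊗ a`. -/
class SymmetricPicard (C : Type u) [Groupoid.{v} C] [MonoidalCategory C]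
    [SymmetricCategory C] where
  dual : C → C
  j : ∀ a : C, 𝟙_ C ≅ dual a ⊗ a

namespace SymmetricPicard

variable {C : Type u} [Groupoid.{v} C] [MonoidalCategory C] [SymmetricCategory C]
  [SymmetricPicard C]

/-- The dual of a morphism `f : a ⟶ b`: the unique morphism `g : dual b ⟶ dual a`
such that `(j b).hom ≫ (g ⊗ inv f) = (j a).hom`. -/
noncomputable def dualHom {a b : C} (f : a ⟶ b) : dual b ⟶ dual a :=
  @Classical.epsilon _
    ⟨(ρ_ (dual b)).inv ≫ (dual b ◁ (j a).hom) ≫ (dual b ◁ (dual a ◁ f)) ≫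
      (α_ (dual b) (dual a) b).inv ≫ ((β_ (dual b) (dual a)).hom ▷ b) ≫
      (α_ (dual a) (dual b) b).hom ≫ (dual a ◁ (j b).inv) ≫ (ρ_ (dual a)).hom⟩
    (fun g => (j b).hom ≫ (g ⊗ₘ inv f) = (j a).hom)

/-- The canonical pairing `(a^• ⊗ b^•) ⊗ (b ⊗ a) ⟶ 𝟙`. -/
noncomputable def pairing (a b : C) : (dual a ⊗ dual b) ⊗ (b ⊗ a) ⟶ 𝟙_ C :=
  (α_ (dual a) (dual b) (b ⊗ a)).hom ≫ (𝟙 (dual a) ⊗ₘ (α_ (dual b) b a).inv) ≫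
    (𝟙 (dual a) ⊗ₘ ((j b).inv ⊗ₘ 𝟙 a)) ≫ (𝟙 (dual a) ⊗ₘ (λ_ a).hom) ≫ (j a).inv

/-- Laplaza's canonical arrow `κ_{a,b} : a^• ⊗ b^• ⟶ (b ⊗ a)^•`: the unique morphism `f`
such that `(f ⊗ 𝟙_{b⊗a}) ≫ j_{b⊗a}⁻¹` is the canonical pairing. -/
noncomputable def kappa (a b : C) : dual a ⊗ dual b ⟶ dual (b ⊗ a) :=
  @Classical.epsilon _
    ⟨(ρ_ (dual a ⊗ dual b)).inv ≫ ((dual a ⊗ dual b) ◁ (j (b ⊗ a)).hom) ≫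
      ((dual a ⊗ dual b) ◁ (β_ (dual (b ⊗ a)) (b ⊗ a)).hom) ≫
      (α_ (dual a ⊗ dual b) (b ⊗ a) (dual (b ⊗ a))).inv ≫
      (pairing a b ▷ dual (b ⊗ a)) ≫ (λ_ (dual (b ⊗ a))).hom⟩
    (fun f => (f ⊗ₘ 𝟙 (b ⊗ a)) ≫ (j (b ⊗ a)).inv = pairing a b)

lemma dualHom_spec {a b : C} (f : a ⟶ b) :
    (j b).hom ≫ (dualHom f ⊗ₘ inv f) = (j a).hom := by
  refine Classical.epsilon_spec (p := fun g => (j b).hom ≫ (g ⊗ₘ inv f) = (j a).hom)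
    ⟨unwhiskerRight (j b ≪≫ β_ (dual b) b) ((j b).inv ≫ (j a).hom ≫ dual a ◁ f), ?_⟩
  rw [MonoidalCategory.tensorHom_def, whiskerRight_unwhiskerRight _ (j b)]
  simp [← whiskerLeft_comp]

open Functor.LaxMonoidal

universe v₁ u₁ v₂ u₂

variable {A : Type u₁} [Groupoid.{v₁} A] [MonoidalCategory A] [SymmetricCategory A]
  [SymmetricPicard A]

/-- `c` is the comparison morphism `c^F_a` of the paper. -/
def IsDualComparison (F : A ⥤ C) [F.LaxMonoidal] (a : A) (c : dual (F.obj a) ⟶ F.obj (dual a)) :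
    Prop :=
  (j (F.obj a)).hom ≫ (c ⊗ₘ 𝟙 (F.obj a)) ≫ μ F (dual a) a = ε F ≫ F.map (j a).hom

lemma IsDualComparison.unique {F : A ⥤ C} [F.LaxMonoidal] {a : A}
    {c c' : dual (F.obj a) ⟶ F.obj (dual a)} (hc : IsDualComparison F a c)
    (hc' : IsDualComparison F a c') : c = c' := by
  rw [IsDualComparison, ← hc', cancel_epi, cancel_mono, tensorHom_id, tensorHom_id] at hc
  exact whiskerRight_injective (j (F.obj a) ≪≫ β_ _ _) hc

lemma IsDualComparison.transport {F G : A ⥤ C} [F.LaxMonoidal] [G.LaxMonoidal] (σ : F ⟶ G)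
    [σ.IsMonoidal] {a : A} {c : dual (F.obj a) ⟶ F.obj (dual a)} (hc : IsDualComparison F a c) :
    IsDualComparison G a (dualHom (σ.app a) ≫ c ≫ σ.app (dual a)) := by
  have split : (dualHom (σ.app a) ≫ c ≫ σ.app (dual a)) ⊗ₘ 𝟙 (G.obj a) =
      (dualHom (σ.app a) ⊗ₘ inv (σ.app a)) ≫ (c ⊗ₘ 𝟙 (F.obj a)) ≫
        (σ.app (dual a) ⊗ₘ σ.app a) := by
    simp only [tensorHom_comp_tensorHom, id_comp, IsIso.inv_hom_id]
  calc (j (G.obj a)).hom ≫ ((dualHom (σ.app a) ≫ c ≫ σ.app (dual a)) ⊗ₘ 𝟙 (G.obj a)) ≫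
        μ G (dual a) a
      = ((j (F.obj a)).hom ≫ (c ⊗ₘ 𝟙 (F.obj a)) ≫ μ F (dual a) a) ≫ σ.app (dual a ⊗ a) := by
        simp only [split, assoc, ← NatTrans.IsMonoidal.tensor,
          reassoc_of% (dualHom_spec (σ.app a))]
    _ = ε G ≫ G.map (j a).hom := by
        rw [hc, assoc, σ.naturality, NatTrans.IsMonoidal.unit_assoc]

/-- Let `F, G` be lax monoidal functors between symmetric Picard categories and
`σ : F ⟶ G` a monoidal natural transformation (i.e. compatible with the units and with the
tensorators).  If `cF` and `cG` are the canonical comparison morphisms of `F` and `G` at an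
object `a` — the unique morphisms satisfying the respective defining equations — then
`(σ_a)^• ≫ cF ≫ σ_{a^•} = cG`. -/
theorem statement10 {A : Type u₁} [Groupoid.{v₁} A] [MonoidalCategory A]
    [SymmetricCategory A] [SymmetricPicard A]
    {B : Type u₂} [Groupoid.{v₂} B] [MonoidalCategory B]
    [SymmetricCategory B] [SymmetricPicard B]
    (F G : A ⥤ B) [F.LaxMonoidal] [G.LaxMonoidal] (σ : F ⟶ G)
    (hσ_unit : ε F ≫ σ.app (𝟙_ A) = ε G)
    (hσ_tensor : ∀ a b : A,
        (σ.app a ⊗ₘ σ.app b) ≫ μ G a b = μ F a b ≫ σ.app (a ⊗ b))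
    (a : A)
    (cF : dual (F.obj a) ⟶ F.obj (dual a))
    (cG : dual (G.obj a) ⟶ G.obj (dual a))
    (hF : (j (F.obj a)).hom ≫ (cF ⊗ₘ 𝟙 (F.obj a)) ≫ μ F (dual a) a
        = ε F ≫ F.map (j a).hom)
    (hG : (j (G.obj a)).hom ≫ (cG ⊗ₘ 𝟙 (G.obj a)) ≫ μ G (dual a) a
        = ε G ≫ G.map (j a).hom) :
    dualHom (σ.app a) ≫ cF ≫ σ.app (dual a) = cG := by
  have : σ.IsMonoidal := ⟨hσ_unit, fun a b => (hσ_tensor a b).symm⟩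
  exact (IsDualComparison.transport σ hF).unique hG

end SymmetricPicard
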